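/- Let k ≥ 2 and let N, R be positive integers. Let φ : {−1,1}^R → ℝ be given by φ(1^R) = 1/2, φ((−1)^R) = −1/2, and φ(z) = 0 otherwise. Let ψ : {−1,1}^N → ℝ satisfy: ‖ψ‖₁ = 1; Σ_x ψ(x) = 0; Σ_{x ∈ D₊} |ψ(x)| ≤ 1/(48N) where D₊ = {x : ψ(x) > 0 and |x| ≥ k}; and Σ_{x ∈ D₋} |ψ(x)| ≤ 1/2 − 2/4^k where D₋ = {x : ψ(x) < 0 and |x| < k}. Then Σ_{x ∈ {−1,1}^{NR}} (φ★ψ)(x) · OR_R(THR_N^k(x₁), …, THR_N^k(x_R)) ≥ 1 − e^{−R/4^{k−1}} − R/(24N). -/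
import Mathlib

open Finset
open scoped Classical

/-- `toSign b` is the real ±1-value encoded by the Boolean `b`, with `true ↦ −1`. -/
noncomputable def toSign (b : Bool) : ℝ := if b then -1 else 1

/-- Hamming weight: the number of coordinates equal to −1 (encoded by `true`). -/
def wt {n : ℕ} (x : Fin n → Bool) : ℕ := (Finset.univ.filter (fun i => x i = true)).card

/-- `THR_N^k(x) = −1` (i.e. `true`) iff `|x| ≥ k`. -/
def THR (N k : ℕ) (x : Fin N → Bool) : Bool := decide (k ≤ wt x)

/-- `OR_R(z) = −1` (i.e. `true`) iff some coordinate of `z` equals −1. -/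
def ORb (R : ℕ) (z : Fin R → Bool) : Bool := decide (∃ i, z i = true)

/-- The dual polynomial `φ` for GapOR: `φ(1^R) = 1/2`, `φ((−1)^R) = −1/2`, `φ(z) = 0` else. -/
noncomputable def phi0 (R : ℕ) : (Fin R → Bool) → ℝ := fun z =>
  if z = fun _ => false then 1 / 2
  else if z = fun _ => true then -(1 / 2)
  else 0

/-- The dual block composition `(φ★ψ)(x) = 2^R · φ(sgn(ψ(x₁)),…,sgn(ψ(x_R))) · ∏ᵢ |ψ(xᵢ)|`. -/
noncomputable def dbc {N R : ℕ} (φ : (Fin R → Bool) → ℝ) (ψ : (Fin N → Bool) → ℝ)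
    (x : Fin R → Fin N → Bool) : ℝ :=
  2 ^ R * φ (fun i => decide (ψ (x i) < 0)) * ∏ i, |ψ (x i)|

noncomputable def gp {N : ℕ} (ψ : (Fin N → Bool) → ℝ) (y : Fin N → Bool) : ℝ :=
  if ψ y < 0 then 0 else |ψ y|

noncomputable def gm {N : ℕ} (ψ : (Fin N → Bool) → ℝ) (y : Fin N → Bool) : ℝ :=
  if ψ y < 0 then |ψ y| else 0

noncomputable def gp' {N : ℕ} (k : ℕ) (ψ : (Fin N → Bool) → ℝ) (y : Fin N → Bool) : ℝ :=
  if THR N k y then 0 else gp ψ y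

noncomputable def gm' {N : ℕ} (k : ℕ) (ψ : (Fin N → Bool) → ℝ) (y : Fin N → Bool) : ℝ :=
  if THR N k y then 0 else gm ψ y

lemma point_id {N : ℕ} (R k : ℕ) (hR : 0 < R) (ψ : (Fin N → Bool) → ℝ)
    (x : Fin R → Fin N → Bool) :
    dbc (phi0 R) ψ x * toSign (ORb R (fun i => THR N k (x i))) =
      2 ^ (R - 1) *
        (2 * ∏ i, gp' k ψ (x i) - ∏ i, gp ψ (x i)
          - 2 * ∏ i, gm' k ψ (x i) + ∏ i, gm ψ (x i)) := by
  have i0 : Fin R := ⟨0, hR⟩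
  have h2 : (2:ℝ) ^ R = 2 ^ (R - 1) * 2 := by
    rw [← pow_succ]; congr 1; omega
  by_cases hA : ∀ i, ¬ ψ (x i) < 0
  · have hz : (fun i => decide (ψ (x i) < 0)) = fun _ => false := by
      funext i; simp [hA i]
    have hpv : ∏ i, gm ψ (x i) = 0 :=
      Finset.prod_eq_zero (Finset.mem_univ i0) (by simp [gm, hA i0])
    have hpv' : ∏ i, gm' k ψ (x i) = 0 :=
      Finset.prod_eq_zero (Finset.mem_univ i0)
        (by by_cases h : THR N k (x i0) <;> simp [gm', gm, h, hA i0])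
    have hpu : ∏ i, gp ψ (x i) = ∏ i, |ψ (x i)| :=
      Finset.prod_congr rfl (fun i _ => by simp [gp, hA i])
    by_cases hC : ∀ i, THR N k (x i) = false
    · have hor : ORb R (fun i => THR N k (x i)) = false := by
        simp only [ORb, decide_eq_false_iff_not]
        rintro ⟨i, hi⟩; rw [hC i] at hi; exact absurd hi (by simp)
      have hpu' : ∏ i, gp' k ψ (x i) = ∏ i, |ψ (x i)| :=
        Finset.prod_congr rfl (fun i _ => by simp [gp', gp, hC i, hA i])
      rw [hpu, hpu', hpv, hpv', hor]
      simp only [dbc, hz, phi0, if_pos rfl, toSign, Bool.false_eq_true, if_neg]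
      simp only [if_true, if_false]
      rw [h2]; ring
    · push_neg at hC
      obtain ⟨j, hj⟩ := hC
      have hjt : THR N k (x j) = true := by
        revert hj; cases THR N k (x j) <;> simp
      have hor : ORb R (fun i => THR N k (x i)) = true := by
        simp only [ORb, decide_eq_true_eq]; exact ⟨j, hjt⟩
      have hpu' : ∏ i, gp' k ψ (x i) = 0 :=
        Finset.prod_eq_zero (Finset.mem_univ j) (by simp [gp', hjt])
      rw [hpu, hpu', hpv, hpv', hor]
      simp only [dbc, hz, phi0, if_pos rfl, toSign, if_pos rfl]
      simp only [if_true, if_false]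
      rw [h2]; ring
  · by_cases hB : ∀ i, ψ (x i) < 0
    · have hz : (fun i => decide (ψ (x i) < 0)) = fun _ => true := by
        funext i; simp [hB i]
      have hne : ((fun _ : Fin R => true) : Fin R → Bool) ≠ (fun _ => false) := by
        intro h; have := congrFun h i0; simp at this
      have hpu : ∏ i, gp ψ (x i) = 0 :=
        Finset.prod_eq_zero (Finset.mem_univ i0) (by simp [gp, hB i0])
      have hpu' : ∏ i, gp' k ψ (x i) = 0 :=
        Finset.prod_eq_zero (Finset.mem_univ i0)
          (by by_cases h : THR N k (x i0) <;> simp [gp', gp, h, hB i0])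
      have hpv : ∏ i, gm ψ (x i) = ∏ i, |ψ (x i)| :=
        Finset.prod_congr rfl (fun i _ => by simp [gm, hB i])
      by_cases hC : ∀ i, THR N k (x i) = false
      · have hor : ORb R (fun i => THR N k (x i)) = false := by
          simp only [ORb, decide_eq_false_iff_not]
          rintro ⟨i, hi⟩; rw [hC i] at hi; exact absurd hi (by simp)
        have hpv' : ∏ i, gm' k ψ (x i) = ∏ i, |ψ (x i)| :=
          Finset.prod_congr rfl (fun i _ => by simp [gm', gm, hC i, hB i])
        rw [hpu, hpu', hpv, hpv', hor]
        simp only [dbc, hz, phi0, if_neg hne, if_pos rfl, toSign, Bool.false_eq_true, if_neg]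
        simp only [if_true, if_false]
        rw [h2]; ring
      · push_neg at hC
        obtain ⟨j, hj⟩ := hC
        have hjt : THR N k (x j) = true := by
          revert hj; cases THR N k (x j) <;> simp
        have hor : ORb R (fun i => THR N k (x i)) = true := by
          simp only [ORb, decide_eq_true_eq]; exact ⟨j, hjt⟩
        have hpv' : ∏ i, gm' k ψ (x i) = 0 :=
          Finset.prod_eq_zero (Finset.mem_univ j) (by simp [gm', hjt])
        rw [hpu, hpu', hpv, hpv', hor]
        simp only [dbc, hz, phi0, if_neg hne, if_pos rfl, toSign, if_pos rfl]
        simp only [if_true, if_false]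
        rw [h2]; ring
    · push_neg at hA; push_neg at hB
      obtain ⟨a, ha⟩ := hA
      obtain ⟨b, hb⟩ := hB
      have hz1 : (fun i => decide (ψ (x i) < 0)) ≠ (fun _ : Fin R => false) := by
        intro h; have := congrFun h a; simp [ha] at this
      have hz2 : (fun i => decide (ψ (x i) < 0)) ≠ (fun _ : Fin R => true) := by
        intro h; have := congrFun h b; simp at this; linarith
      have hpu : ∏ i, gp ψ (x i) = 0 :=
        Finset.prod_eq_zero (Finset.mem_univ a) (by simp [gp, ha])
      have hpu' : ∏ i, gp' k ψ (x i) = 0 :=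
        Finset.prod_eq_zero (Finset.mem_univ a)
          (by by_cases h : THR N k (x a) <;> simp [gp', gp, h, ha])
      have hpv : ∏ i, gm ψ (x i) = 0 :=
        Finset.prod_eq_zero (Finset.mem_univ b) (by simp [gm, hb])
      have hpv' : ∏ i, gm' k ψ (x i) = 0 :=
        Finset.prod_eq_zero (Finset.mem_univ b)
          (by by_cases h : THR N k (x b) <;> simp [gm', gm, h, hb])
      rw [hpu, hpu', hpv, hpv']
      simp [dbc, phi0, if_neg hz1, if_neg hz2]

theorem stmt9 (k N R : ℕ) (hk : 2 ≤ k) (hN : 0 < N) (hR : 0 < R)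
    (ψ : (Fin N → Bool) → ℝ)
    (h1 : ∑ x : Fin N → Bool, |ψ x| = 1)
    (h0 : ∑ x : Fin N → Bool, ψ x = 0)
    (hplus : ∑ x ∈ Finset.univ.filter (fun x : Fin N → Bool => 0 < ψ x ∧ k ≤ wt x), |ψ x|
      ≤ 1 / (48 * N))
    (hminus : ∑ x ∈ Finset.univ.filter (fun x : Fin N → Bool => ψ x < 0 ∧ wt x < k), |ψ x|
      ≤ 1 / 2 - 2 / 4 ^ k) :
    1 - Real.exp (-(R : ℝ) / 4 ^ (k - 1)) - R / (24 * N) ≤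
      ∑ x : Fin R → Fin N → Bool,
        dbc (phi0 R) ψ x * toSign (ORb R (fun i => THR N k (x i))) := by
  classical
  have hN' : (0:ℝ) < N := by exact_mod_cast hN
  set Au : ℝ := ∑ y, gp ψ y with hAu
  set Av : ℝ := ∑ y, gm ψ y with hAv
  set Bu : ℝ := ∑ y, gp' k ψ y with hBu
  set Bv : ℝ := ∑ y, gm' k ψ y with hBv
  -- Au = Av = 1/2
  have hsum1 : Au + Av = 1 := by
    rw [hAu, hAv, ← Finset.sum_add_distrib, ← h1]
    refine Finset.sum_congr rfl fun y _ => ?_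
    unfold gp gm; split_ifs <;> ring
  have hsum2 : Au - Av = 0 := by
    rw [hAu, hAv, ← Finset.sum_sub_distrib, ← h0]
    refine Finset.sum_congr rfl fun y _ => ?_
    unfold gp gm
    rcases lt_trichotomy (ψ y) 0 with h | h | h
    · simp [h, abs_of_neg h]
    · simp [h]
    · simp [not_lt.2 h.le, abs_of_pos h]
  have hAuv : Au = 1/2 := by linarith
  have hAvv : Av = 1/2 := by linarith
  -- Bv ≤ 1/2 - 2/4^k and Bv ≥ 0
  have hBv_le : Bv ≤ 1/2 - 2/4^k := by
    rw [hBv]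
    calc ∑ y, gm' k ψ y
        = ∑ y, (if ψ y < 0 ∧ wt y < k then |ψ y| else 0) := by
          refine Finset.sum_congr rfl fun y _ => ?_
          by_cases h1 : k ≤ wt y
          · have ht : THR N k y = true := by simp [THR, h1]
            simp [gm', ht, show ¬ wt y < k by omega]
          · have ht : THR N k y = false := by simp [THR, h1]
            simp [gm', gm, ht, show wt y < k by omega]
      _ = ∑ y ∈ Finset.univ.filter (fun y : Fin N → Bool => ψ y < 0 ∧ wt y < k), |ψ y| :=
          (Finset.sum_filter _ _).symm
      _ ≤ 1/2 - 2/4^k := hminus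
  have hBv_nonneg : 0 ≤ Bv := by
    rw [hBv]
    refine Finset.sum_nonneg fun y _ => ?_
    unfold gm' gm; split_ifs <;> positivity
  -- Bu ≥ 1/2 - 1/(48N)
  have hBu_ge : 1/2 - 1/(48*(N:ℝ)) ≤ Bu := by
    have hdiff : Au - Bu ≤ 1/(48*(N:ℝ)) := by
      rw [hAu, hBu, ← Finset.sum_sub_distrib]
      calc ∑ y, (gp ψ y - gp' k ψ y)
          ≤ ∑ y, (if 0 < ψ y ∧ k ≤ wt y then |ψ y| else 0) := by
            refine Finset.sum_le_sum fun y _ => ?_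
            by_cases h1 : k ≤ wt y
            · have ht : THR N k y = true := by simp [THR, h1]
              by_cases h2 : 0 < ψ y
              · have hn : ¬ ψ y < 0 := by linarith
                simp [gp, gp', ht, h1, h2, hn]
              · have hgp : gp ψ y = 0 := by
                  unfold gp; split_ifs with h
                  · rfl
                  · have : ψ y = 0 := le_antisymm (not_lt.1 h2) (not_lt.1 h)
                    simp [this]
                simp [gp', hgp, h2]
            · have ht : THR N k y = false := by simp [THR, h1]
              simp [gp', ht, h1]
        _ = ∑ y ∈ Finset.univ.filter (fun y : Fin N → Bool => 0 < ψ y ∧ k ≤ wt y), |ψ y| :=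
            (Finset.sum_filter _ _).symm
        _ ≤ 1/(48*(N:ℝ)) := hplus
    linarith [hAuv]
  -- key identity
  have key : ∑ x : Fin R → Fin N → Bool,
        dbc (phi0 R) ψ x * toSign (ORb R (fun i => THR N k (x i)))
      = (2*Bu)^R - (2*Bv)^R := by
    have h2 : (2:ℝ) ^ R = 2 ^ (R - 1) * 2 := by
      rw [← pow_succ]; congr 1; omega
    have e1 : Au ^ R = ∑ p : Fin R → Fin N → Bool, ∏ i, gp ψ (p i) :=
      Fintype.sum_pow _ R
    have e2 : Av ^ R = ∑ p : Fin R → Fin N → Bool, ∏ i, gm ψ (p i) :=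
      Fintype.sum_pow _ R
    have e3 : Bu ^ R = ∑ p : Fin R → Fin N → Bool, ∏ i, gp' k ψ (p i) :=
      Fintype.sum_pow _ R
    have e4 : Bv ^ R = ∑ p : Fin R → Fin N → Bool, ∏ i, gm' k ψ (p i) :=
      Fintype.sum_pow _ R
    have step : ∑ x : Fin R → Fin N → Bool,
        dbc (phi0 R) ψ x * toSign (ORb R (fun i => THR N k (x i)))
        = 2^(R-1) * (2 * Bu^R - Au^R - 2 * Bv^R + Av^R) := by
      rw [e1, e2, e3, e4, Finset.mul_sum, Finset.mul_sum, ← Finset.sum_sub_distrib,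
        ← Finset.sum_sub_distrib, ← Finset.sum_add_distrib, Finset.mul_sum]
      exact Finset.sum_congr rfl fun x _ => point_id R k hR ψ x
    rw [step, hAuv, hAvv, mul_pow, mul_pow, h2]
    ring
  rw [key]
  -- lower bound on (2Bu)^R
  have hc1 : (1:ℝ)/(24*(N:ℝ)) ≤ 2 := by
    rw [div_le_iff₀ (by positivity)]
    have : (1:ℝ) ≤ N := by exact_mod_cast hN
    nlinarith
  have htwo : (2:ℝ)*(1/(48*(N:ℝ))) = 1/(24*(N:ℝ)) := by
    field_simp; ring
  have hBu2 : -(1/(24*(N:ℝ))) ≤ 2*Bu - 1 := by nlinarith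
  have hbern : 1 - (R:ℝ)/(24*(N:ℝ)) ≤ (2*Bu)^R := by
    have h := one_add_mul_le_pow (a := 2*Bu - 1) (by linarith) R
    rw [show (1:ℝ) + (2*Bu - 1) = 2*Bu by ring] at h
    have h2 : 1 + (R:ℝ) * (2*Bu - 1) ≤ (2*Bu)^R := h
    have h3 : -((R:ℝ)/(24*(N:ℝ))) ≤ (R:ℝ) * (2*Bu - 1) := by
      have := mul_le_mul_of_nonneg_left hBu2 (by positivity : (0:ℝ) ≤ (R:ℝ))
      calc -((R:ℝ)/(24*(N:ℝ))) = (R:ℝ) * (-(1/(24*(N:ℝ)))) := by ring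
        _ ≤ (R:ℝ) * (2*Bu - 1) := this
    linarith
  -- upper bound on (2Bv)^R
  have h4k : (4:ℝ)^k = 4^(k-1) * 4 := by
    rw [← pow_succ]; congr 1; omega
  have hck : (2:ℝ) * (2/4^k) = 1/(4:ℝ)^(k-1) := by
    rw [h4k]
    have : (0:ℝ) < (4:ℝ)^(k-1) := by positivity
    field_simp
    ring
  have hBv2 : 2*Bv ≤ 1 - 1/(4:ℝ)^(k-1) := by nlinarith
  have hexp : (2*Bv)^R ≤ Real.exp (-(R:ℝ)/4^(k-1)) := by
    have hle : 2*Bv ≤ Real.exp (-(1/(4:ℝ)^(k-1))) := by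
      have := Real.add_one_le_exp (-(1/(4:ℝ)^(k-1)))
      linarith
    have hpow : (2*Bv)^R ≤ (Real.exp (-(1/(4:ℝ)^(k-1))))^R :=
      pow_le_pow_left₀ (by linarith) hle R
    have : (Real.exp (-(1/(4:ℝ)^(k-1))))^R = Real.exp (-(R:ℝ)/4^(k-1)) := by
      rw [← Real.exp_nat_mul]
      congr 1
      ring
    linarith [hpow, this.le]
  linarith
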